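/- Let n be a natural number and a, b, c, d real numbers such that all Pochhammer symbols (c)_k, (d)_k, (1−b−n)_k, (a−c−n+1)_k are nonzero for 0 ≤ k ≤ n. Then ∑_{k=0}^n [(−n)_k (a)_k (b)_k]/[(c)_k (d)_k k!] = [(c−a)_n (b)_n]/[(c)_n (d)_n] · ∑_{k=0}^n [(−n)_k (d−b)_k (1−c−n)_k]/[(1−b−n)_k (a−c−n+1)_k k!]. -/
import Mathlib


/-- The Pochhammer symbol `(a)_k = a (a+1) ⋯ (a+k-1)` over ℝ. -/
noncomputable def poch (a : ℝ) (k : ℕ) : ℝ := (ascPochhammer ℝ k).eval a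

open Finset Polynomial

lemma poch_zero (a : ℝ) : poch a 0 = 1 := by simp [poch]

lemma poch_congr {x y : ℝ} (k : ℕ) (h : x = y) : poch x k = poch y k := by rw [h]

lemma poch_succ (a : ℝ) (k : ℕ) : poch a (k + 1) = poch a k * (a + k) :=
  ascPochhammer_succ_eval k a

lemma poch_succ_left (a : ℝ) (k : ℕ) : poch a (k + 1) = a * poch (a + 1) k := by
  unfold poch
  rw [ascPochhammer_succ_left, eval_mul, eval_X, eval_comp, eval_add, eval_X, eval_one]

lemma poch_add (a : ℝ) (j m : ℕ) : poch a (j + m) = poch a j * poch (a + j) m := by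
  induction m with
  | zero => simp [poch_zero]
  | succ m ih =>
    have : j + (m + 1) = (j + m) + 1 := by omega
    rw [this, poch_succ, ih, poch_succ]
    push_cast
    ring

lemma poch_neg {k n : ℕ} (h : k ≤ n) :
    poch (-(n : ℝ)) k = (-1) ^ k * (n.choose k : ℝ) * (k.factorial : ℝ) := by
  induction k with
  | zero => simp [poch_zero]
  | succ k ih =>
    have hk : k ≤ n := Nat.le_of_succ_le h
    rw [poch_succ, ih hk]
    have hch : ((n.choose (k+1) : ℝ)) * (k+1) = (n.choose k : ℝ) * ((n : ℝ) - k) := by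
      have := Nat.choose_succ_right_eq n k
      have hc : ((n.choose (k+1) * (k+1) : ℕ) : ℝ) = ((n.choose k * (n - k) : ℕ) : ℝ) := by
        exact_mod_cast congrArg (Nat.cast (R := ℝ)) this
      push_cast [Nat.cast_sub hk] at hc
      linarith
    have hf : ((k+1).factorial : ℝ) = (k.factorial : ℝ) * (k+1) := by
      rw [Nat.factorial_succ]; push_cast; ring
    rw [hf]
    have : (-(n:ℝ) + k) = -((n:ℝ) - k) := by ring
    rw [this]
    rw [pow_succ]
    linear_combination ((-1:ℝ)^k * (k.factorial:ℝ)) * hch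

lemma reflect (x : ℝ) {j n : ℕ} (h : j ≤ n) :
    poch x n = poch x (n - j) * ((-1) ^ j * poch (1 - x - n) j) := by
  induction j with
  | zero => simp [poch_zero]
  | succ j ih =>
    have hj : j ≤ n := Nat.le_of_succ_le h
    have h1 : n - j = (n - (j + 1)) + 1 := by omega
    have hcast : ((n - (j + 1) : ℕ) : ℝ) = (n : ℝ) - j - 1 := by
      have := Nat.cast_sub h (R := ℝ); push_cast at this; linarith
    rw [ih hj, h1, poch_succ, hcast, poch_succ]
    ring

lemma chu (N : ℕ) (X Y : ℝ) :
    ∑ m ∈ range (N + 1),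
      (-1) ^ m * (N.choose m : ℝ) * poch X m * poch (Y + m) (N - m) = poch (Y - X) N := by
  induction N generalizing Y with
  | zero => simp [poch_zero]
  | succ N ih =>
    set A : ℕ → ℝ := fun m =>
      (-1) ^ m * (N.choose m : ℝ) * poch X m * poch (Y + m) (N + 1 - m) with hA
    set B : ℕ → ℝ := fun i =>
      -((-1) ^ i * (N.choose i : ℝ) * poch X i * (X + i) * poch ((Y + 1) + i) (N - i)) with hB
    rw [Finset.sum_range_succ']
    have hsplit : ∀ i ∈ range (N + 1),
        (-1) ^ (i+1) * ((N+1).choose (i+1) : ℝ) * poch X (i+1) *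
          poch (Y + (i+1:ℕ)) (N + 1 - (i+1)) = A (i+1) + B i := by
      intro i hi
      have hiN : i ≤ N := by simpa [Nat.lt_succ_iff] using hi
      have hch : (((N+1).choose (i+1) : ℕ) : ℝ) = (N.choose i : ℝ) + (N.choose (i+1) : ℝ) := by
        rw [Nat.choose_succ_succ]; push_cast; ring
      have h3 : poch (Y + ((i+1:ℕ):ℝ)) (N - i) = poch ((Y+1) + i) (N - i) := by
        apply poch_congr; push_cast; ring
      simp only [hA, hB]
      have h1 : N + 1 - (i + 1) = N - i := by omega
      rw [h1, hch, poch_succ, h3]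
      ring
    rw [Finset.sum_congr rfl hsplit, Finset.sum_add_distrib]
    have hf0 : (-1 : ℝ) ^ 0 * ((N+1).choose 0 : ℝ) * poch X 0 * poch (Y + (0:ℕ)) (N + 1 - 0)
        = A 0 := by simp [hA]
    rw [hf0]
    have hA2 : ∑ i ∈ range (N + 1), A (i + 1) + A 0 = ∑ m ∈ range (N + 1), A m := by
      rw [← Finset.sum_range_succ']
      rw [Finset.sum_range_succ]
      have : A (N + 1) = 0 := by simp [hA, Nat.choose_succ_self]
      rw [this, add_zero]
    rw [add_right_comm, hA2, ← Finset.sum_add_distrib]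
    have hterm : ∀ i ∈ range (N + 1), A i + B i =
        (Y - X) * ((-1) ^ i * (N.choose i : ℝ) * poch X i * poch ((Y + 1) + i) (N - i)) := by
      intro i hi
      have hiN : i ≤ N := by simpa [Nat.lt_succ_iff] using hi
      have h1 : N + 1 - i = (N - i) + 1 := by omega
      have h2 : poch (Y + i) (N - i + 1) = (Y + i) * poch ((Y + 1) + i) (N - i) := by
        rw [poch_succ_left]
        ring_nf
      simp only [hA, hB]
      rw [h1, h2]
      ring
    rw [Finset.sum_congr rfl hterm, ← Finset.mul_sum, ih (Y + 1)]
    have : poch (Y + 1 - X) N = poch ((Y - X) + 1) N := by apply poch_congr; ring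
    rw [this, ← poch_succ_left]

lemma chu_div (N : ℕ) (X Y : ℝ) (hY : ∀ m ≤ N, poch Y m ≠ 0) :
    ∑ m ∈ range (N + 1), poch (-(N : ℝ)) m * poch X m / (poch Y m * (m.factorial : ℝ))
      = poch (Y - X) N / poch Y N := by
  rw [← chu N X Y, Finset.sum_div]
  apply Finset.sum_congr rfl
  intro m hm
  have hmN : m ≤ N := by simpa [Nat.lt_succ_iff] using hm
  have hYN : poch Y N = poch Y m * poch (Y + m) (N - m) := by
    have : N = m + (N - m) := by omega
    rw [this, poch_add]; congr 2 <;> omega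
  have hYm : poch Y m ≠ 0 := hY m hmN
  have hYr : poch (Y + m) (N - m) ≠ 0 := by
    intro h; apply hY N le_rfl; rw [hYN, h, mul_zero]
  have hfac : (m.factorial : ℝ) ≠ 0 := by exact_mod_cast m.factorial_ne_zero
  rw [poch_neg hmN, hYN]
  field_simp

lemma trans1 (n : ℕ) (a b c d : ℝ)
    (hc : ∀ k ≤ n, poch c k ≠ 0) (hd : ∀ k ≤ n, poch d k ≠ 0)
    (h2 : ∀ k ≤ n, poch (a - c - n + 1) k ≠ 0) :
    ∑ k ∈ Finset.range (n + 1),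
        poch (-(n : ℝ)) k * poch a k * poch b k / (poch c k * poch d k * (k.factorial : ℝ))
      = poch (c - a) n / poch c n *
        ∑ j ∈ Finset.range (n + 1),
          poch (-(n : ℝ)) j * poch a j * poch (d - b) j /
            (poch d j * poch (a - c - (n : ℝ) + 1) j * (j.factorial : ℝ)) := by
  set F : ℕ → ℕ → ℝ := fun k j =>
    poch (-(n : ℝ)) k * poch a k *
      ((-1) ^ j * (k.choose j : ℝ) * poch (d - b) j * poch (d + j) (k - j)) /
      (poch c k * poch d k * (k.factorial : ℝ)) with hF
  have hL : ∀ k ∈ range (n + 1),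
      poch (-(n : ℝ)) k * poch a k * poch b k / (poch c k * poch d k * (k.factorial : ℝ))
        = ∑ j ∈ range (n + 1), F k j := by
    intro k hk
    have hb : poch b k
        = ∑ j ∈ range (k + 1), (-1) ^ j * (k.choose j : ℝ) * poch (d - b) j
            * poch (d + j) (k - j) := by
      rw [chu k (d - b) d]; exact poch_congr k (by ring)
    rw [hb, Finset.mul_sum, Finset.sum_div]
    apply Finset.sum_subset (Finset.range_subset_range.mpr (by simpa [Nat.lt_succ_iff] using hk))
    intro j hj hj'
    have hkj : k < j := by simp only [Finset.mem_range, Nat.lt_succ_iff] at hj hj'; omega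
    simp [hF, Nat.choose_eq_zero_of_lt hkj]
  rw [Finset.sum_congr rfl hL, Finset.sum_comm, Finset.mul_sum]
  apply Finset.sum_congr rfl
  intro j hj
  have hjn : j ≤ n := by simpa [Nat.lt_succ_iff] using hj
  have hsplit : ∑ k ∈ range (n + 1), F k j = ∑ m ∈ range (n - j + 1), F (j + m) j := by
    have h : n + 1 = j + (n - j + 1) := by omega
    rw [h, Finset.sum_range_add]
    have hz : ∑ k ∈ range j, F k j = 0 := by
      apply Finset.sum_eq_zero
      intro k hk
      have : k < j := Finset.mem_range.mp hk
      simp [hF, Nat.choose_eq_zero_of_lt this]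
    rw [hz, zero_add]
  rw [hsplit]
  set Cj : ℝ := (-1 : ℝ) ^ j * poch (-(n : ℝ)) j * poch a j * poch (d - b) j /
    (poch c j * poch d j * (j.factorial : ℝ)) with hCj
  have hcj : poch c j ≠ 0 := hc j hjn
  have hdj : poch d j ≠ 0 := hd j hjn
  have hcn : poch c n = poch c j * poch (c + j) (n - j) := by
    have h : n = j + (n - j) := by omega
    nth_rewrite 1 [h]
    rw [poch_add]
  have hcr : poch (c + j) (n - j) ≠ 0 := by
    intro h; apply hc n le_rfl; rw [hcn, h, mul_zero]
  have hcshift : ∀ m ≤ n - j, poch (c + j) m ≠ 0 := by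
    intro m hm h
    apply hc (j + m) (by omega)
    rw [poch_add, h, mul_zero]
  have hterm : ∀ m ∈ range (n - j + 1), F (j + m) j
      = Cj * (poch (-((n - j : ℕ) : ℝ)) m * poch (a + j) m /
          (poch (c + j) m * (m.factorial : ℝ))) := by
    intro m hm
    have hmn : m ≤ n - j := by simpa [Nat.lt_succ_iff] using hm
    have hjm : j + m ≤ n := by omega
    have e1 : poch (-(n : ℝ)) (j + m) = poch (-(n : ℝ)) j * poch (-((n - j : ℕ) : ℝ)) m := by
      rw [poch_add]
      congr 1
      apply poch_congr
      push_cast [Nat.cast_sub hjn]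
      ring
    have e2 : poch a (j + m) = poch a j * poch (a + j) m := poch_add a j m
    have e3 : poch c (j + m) = poch c j * poch (c + j) m := poch_add c j m
    have e4 : poch d (j + m) = poch d j * poch (d + j) m := poch_add d j m
    have e5 : j + m - j = m := by omega
    have hfac : (((j + m).factorial : ℕ) : ℝ)
        = ((j + m).choose j : ℝ) * (j.factorial : ℝ) * (m.factorial : ℝ) := by
      have := Nat.choose_mul_factorial_mul_factorial (Nat.le_add_right j m)
      rw [Nat.add_sub_cancel_left] at this
      exact_mod_cast this.symm
    have hdjm : poch (d + j) m ≠ 0 := by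
      intro h; apply hd (j + m) hjm; rw [e4, h, mul_zero]
    have hcjm : poch (c + j) m ≠ 0 := hcshift m hmn
    have hjf : (j.factorial : ℝ) ≠ 0 := by exact_mod_cast j.factorial_ne_zero
    have hmf : (m.factorial : ℝ) ≠ 0 := by exact_mod_cast m.factorial_ne_zero
    have hch : ((j + m).choose j : ℝ) ≠ 0 := by
      have := Nat.choose_pos (Nat.le_add_right j m)
      positivity
    simp only [hF, hCj, e5]
    rw [e1, e2, e3, e4, hfac]
    field_simp
  rw [Finset.sum_congr rfl hterm, ← Finset.mul_sum, chu_div (n - j) (a + j) (c + j) hcshift]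
  have e6 : poch (c + j - (a + j)) (n - j) = poch (c - a) (n - j) := poch_congr _ (by ring)
  have e7 : poch (c - a) n = poch (c - a) (n - j) * ((-1) ^ j * poch (a - c - n + 1) j) := by
    rw [reflect (c - a) hjn]
    congr 2
    apply poch_congr
    ring
  rw [e6, e7, hcn]
  have hrj : poch (a - c - n + 1) j ≠ 0 := h2 j hjn
  have hjf : (j.factorial : ℝ) ≠ 0 := by exact_mod_cast j.factorial_ne_zero
  simp only [hCj]
  field_simp



theorem thomae_A7 (n : ℕ) (a b c d : ℝ)
    (hc : ∀ k ≤ n, poch c k ≠ 0) (hd : ∀ k ≤ n, poch d k ≠ 0)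
    (h1 : ∀ k ≤ n, poch (1 - b - n) k ≠ 0)
    (h2 : ∀ k ≤ n, poch (a - c - n + 1) k ≠ 0) :
    ∑ k ∈ Finset.range (n + 1),
        (poch (-(n : ℝ)) k * poch a k * poch b k) /
          (poch c k * poch d k * (k.factorial : ℝ)) =
      (poch (c - a) n * poch b n) / (poch c n * poch d n) *
        ∑ k ∈ Finset.range (n + 1),
          (poch (-(n : ℝ)) k * poch (d - b) k * poch (1 - c - n) k) /
            (poch (1 - b - n) k * poch (a - c - n + 1) k * (k.factorial : ℝ)) := by
  rw [trans1 n a b c d hc hd h2]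
  have h2'' : ∀ k ≤ n, poch (d - b - d - (n : ℝ) + 1) k ≠ 0 := by
    intro k hk
    rw [poch_congr k (show d - b - d - (n : ℝ) + 1 = 1 - b - (n : ℝ) by ring)]
    exact h1 k hk
  have T2 := trans1 n (d - b) a d (a - c - (n : ℝ) + 1) hd h2 h2''
  have hswap : ∑ j ∈ range (n + 1),
        poch (-(n : ℝ)) j * poch a j * poch (d - b) j /
          (poch d j * poch (a - c - (n : ℝ) + 1) j * (j.factorial : ℝ))
      = ∑ k ∈ range (n + 1),
        poch (-(n : ℝ)) k * poch (d - b) k * poch a k /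
          (poch d k * poch (a - c - (n : ℝ) + 1) k * (k.factorial : ℝ)) := by
    apply Finset.sum_congr rfl; intro k _; ring
  rw [hswap, T2]
  have e1 : poch (d - (d - b)) n = poch b n := poch_congr n (by ring)
  have hsum2 : ∑ j ∈ range (n + 1),
        poch (-(n : ℝ)) j * poch (d - b) j * poch (a - c - (n : ℝ) + 1 - a) j /
          (poch (a - c - (n : ℝ) + 1) j * poch (d - b - d - (n : ℝ) + 1) j * (j.factorial : ℝ))
      = ∑ k ∈ range (n + 1),
        poch (-(n : ℝ)) k * poch (d - b) k * poch (1 - c - (n : ℝ)) k /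
          (poch (1 - b - (n : ℝ)) k * poch (a - c - (n : ℝ) + 1) k * (k.factorial : ℝ)) := by
    apply Finset.sum_congr rfl; intro k _
    rw [poch_congr k (show a - c - (n : ℝ) + 1 - a = 1 - c - (n : ℝ) by ring),
        poch_congr k (show d - b - d - (n : ℝ) + 1 = 1 - b - (n : ℝ) by ring)]
    ring
  rw [e1, hsum2]
  ring
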